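/- arXiv:0902.1493 — 2 statements merged into one kernel-verified Lean document; each statement's English description precedes it below -/
import Mathlib

section
/- Let $A$ be a ring and $e \in A$ an idempotent such that the two-sided ideal generated by $e$ is all of $A$ (i.e., $AeA = A$). Then the map $z \mapsto eze$ restricts to a ring isomorphism from the center $Z(A)$ onto the center $Z(eAe)$ of the corner ring $eAe$. -/
/-- Morita invariance of the center (algebraic shadow): if `e` is a full idempotent
(`AeA = A`), then `z ↦ e z e` is a ring isomorphism from `Z(A)` onto the center of the
corner ring `eAe` (whose unit is `e`). -/
theorem center_corner_ring_iso {A : Type*} [Ring A] (e : A) (he : e * e = e)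
    (hfull : ∃ (n : ℕ) (a b : Fin n → A), ∑ i, a i * e * b i = 1) :
    Set.BijOn (fun z : A => e * z * e) (Set.center A)
      {x : A | e * x * e = x ∧ ∀ y : A, e * y * e = y → x * y = y * x} ∧
    (∀ z w : A, e * (z + w) * e = e * z * e + e * w * e) ∧
    (∀ z ∈ Set.center A, ∀ w ∈ Set.center A, e * (z * w) * e = (e * z * e) * (e * w * e)) ∧
    e * (1 : A) * e = e := by
  obtain ⟨n, a, b, hab⟩ := hfull
  have hcomm : ∀ z ∈ Set.center A, ∀ g : A, g * z = z * g := by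
    intro z hz g
    exact Semigroup.mem_center_iff.mp hz g
  -- for central z, e*z*e = z*e
  have hze : ∀ z ∈ Set.center A, e * z * e = z * e := by
    intro z hz
    rw [hcomm z hz e, mul_assoc, he]
  refine ⟨⟨?_, ?_, ?_⟩, ?_, ?_, ?_⟩
  · -- MapsTo
    intro z hz
    simp only [Set.mem_setOf_eq]
    constructor
    · rw [hze z hz]
      calc e * (z * e) * e = e * z * (e * e) := by simp only [mul_assoc]
        _ = e * z * e := by rw [he]
        _ = z * e := hze z hz
    · intro y hy
      have hey : e * y = y := by
        conv_lhs => rw [← hy]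
        calc e * (e * y * e) = (e * e) * y * e := by simp only [mul_assoc]
          _ = e * y * e := by rw [he]
          _ = y := hy
      have hye : y * e = y := by
        conv_lhs => rw [← hy]
        calc (e * y * e) * e = e * y * (e * e) := by simp only [mul_assoc]
          _ = e * y * e := by rw [he]
          _ = y := hy
      rw [hze z hz]
      calc z * e * y = z * (e * y) := by rw [mul_assoc]
        _ = z * y := by rw [hey]
        _ = y * z := (hcomm z hz y).symm
        _ = y * (z * e) := by rw [← mul_assoc y z e, hcomm z hz y, mul_assoc, hye]
  · -- InjOn
    intro z hz w hw h
    simp only at h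
    have h' : z * e = w * e := by rw [← hze z hz, ← hze w hw, h]
    have expand : ∀ u : A, u ∈ Set.center A → u = ∑ i, a i * (u * e) * b i := by
      intro u hu
      calc u = u * 1 := (mul_one u).symm
        _ = u * ∑ i, a i * e * b i := by rw [hab]
        _ = ∑ i, u * (a i * e * b i) := Finset.mul_sum _ _ _
        _ = ∑ i, a i * (u * e) * b i := by
            apply Finset.sum_congr rfl
            intro i _
            calc u * (a i * e * b i) = (u * a i) * (e * b i) := by simp only [mul_assoc]
              _ = (a i * u) * (e * b i) := by rw [hcomm u hu (a i)]
              _ = a i * (u * e) * b i := by simp only [mul_assoc]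
    rw [expand z hz, expand w hw, h']
  · -- SurjOn
    intro x hx
    obtain ⟨hx1, hx2⟩ := hx
    have hex : e * x = x := by
      conv_lhs => rw [← hx1]
      calc e * (e * x * e) = (e * e) * x * e := by simp only [mul_assoc]
        _ = e * x * e := by rw [he]
        _ = x := hx1
    have hxe : x * e = x := by
      conv_lhs => rw [← hx1]
      calc (e * x * e) * e = e * x * (e * e) := by simp only [mul_assoc]
        _ = e * x * e := by rw [he]
        _ = x := hx1
    -- key swap lemma : x * c * e = e * c * x for any c
    have hC : ∀ c : A, x * c * e = e * c * x := by
      intro c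
      have hy : e * (e * c * e) * e = e * c * e := by
        calc e * (e * c * e) * e = (e * e) * c * (e * e) := by simp only [mul_assoc]
          _ = e * c * e := by rw [he]
      have h2 := hx2 (e * c * e) hy
      calc x * c * e = x * (e * c * e) := by
            rw [show x * (e * c * e) = x * e * (c * e) from by simp only [mul_assoc], hxe,
              mul_assoc]
        _ = (e * c * e) * x := h2
        _ = e * c * (e * x) := by simp only [mul_assoc]
        _ = e * c * x := by rw [hex]
    set z : A := ∑ i, a i * x * b i with hzdef
    have hterm : ∀ (r : A) (i j : Fin n),
        (a i * x * b i) * r * (a j * e * b j) = (a i * e * b i) * r * (a j * x * b j) := by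
      intro r i j
      have h := hC (b i * r * a j)
      calc (a i * x * b i) * r * (a j * e * b j)
          = a i * (x * (b i * r * a j) * e) * b j := by simp only [mul_assoc]
        _ = a i * (e * (b i * r * a j) * x) * b j := by rw [h]
        _ = (a i * e * b i) * r * (a j * x * b j) := by simp only [mul_assoc]
    have hzc : z ∈ Set.center A := by
      rw [Semigroup.mem_center_iff]
      intro g
      calc g * z = (∑ i, a i * e * b i) * (g * z) := by rw [hab, one_mul]
        _ = ∑ i, (a i * e * b i) * (g * z) := Finset.sum_mul _ _ _
        _ = ∑ i, ∑ j, (a i * e * b i) * g * (a j * x * b j) := by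
            apply Finset.sum_congr rfl
            intro i _
            rw [hzdef, Finset.mul_sum, Finset.mul_sum]
            apply Finset.sum_congr rfl
            intro j _
            simp only [mul_assoc]
        _ = ∑ i, ∑ j, (a i * x * b i) * g * (a j * e * b j) := by
            apply Finset.sum_congr rfl; intro i _
            apply Finset.sum_congr rfl; intro j _
            exact (hterm g i j).symm
        _ = ∑ i, (a i * x * b i) * g * (∑ j, a j * e * b j) := by
            apply Finset.sum_congr rfl; intro i _
            rw [Finset.mul_sum]
        _ = ∑ i, (a i * x * b i) * g := by
            apply Finset.sum_congr rfl; intro i _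
            rw [hab, mul_one]
        _ = (∑ i, a i * x * b i) * g := (Finset.sum_mul _ _ _).symm
        _ = z * g := by rw [hzdef]
    refine ⟨z, hzc, ?_⟩
    show e * z * e = x
    calc e * z * e = ∑ i, e * (a i * x * b i) * e := by
          rw [hzdef, Finset.mul_sum, Finset.sum_mul]
      _ = ∑ i, (x * e) * (a i * e * b i) * e := by
          apply Finset.sum_congr rfl
          intro i _
          calc e * (a i * x * b i) * e = (x * a i * e) * (b i * e) := by
                rw [hC (a i)]; simp only [mul_assoc]
            _ = (x * e) * (a i * e * b i) * e := by rw [hxe]; simp only [mul_assoc]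
      _ = (x * e) * (∑ i, a i * e * b i) * e := by rw [Finset.mul_sum, Finset.sum_mul]
      _ = x := by rw [hab, mul_one, hxe, hxe]
  · intro z w
    noncomm_ring
  · intro z hz w hw
    rw [hze z hz, hze w hw]
    calc e * (z * w) * e = (z * w) * e := hze (z*w) (Set.mul_mem_center hz hw)
      _ = z * (w * e) := by rw [mul_assoc]
      _ = (z * e) * (w * e) := by
          rw [show z * e * (w * e) = z * (e * w * e) from by simp only [mul_assoc], hze w hw]
  · rw [mul_one, he]
end

section
/- Let $G$ be a finite group, $M$ a finite-dimensional $\mathbb{C}$-vector space, and suppose that for every finite-dimensional complex representation $E$ of $G$ we are given a linear map $b_E : E \otimes E^* \to \mathrm{End}(M)$, natural in $E$, satisfying the multiplicativity relation $b_{E_1 \otimes E_2}(v_1 \otimes v_2 \otimes v_1^* \otimes v_2^*) = b_{E_1}(v_1 \otimes v_1^*)\, b_{E_2}(v_2 \otimes v_2^*)$ for all $v_i \in E_i$, $v_i^* \in E_i^*$, and sending the canonical element of the trivial representation to $\mathrm{id}_M$. Then there is a unique unital algebra homomorphism $\phi$ from the algebra of $\mathbb{C}$-valued functions on $G$ (with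 pointwise multiplication) to $\mathrm{End}(M)$ such that $\phi$ sends each matrix coefficient $g \mapsto v^*(\rho_E(g)v)$ to $b_E(v \otimes v^*)$. -/
open scoped TensorProduct

/-!
The algebra homomorphism is forced: every `f : G → ℂ` is itself a matrix coefficient, namely
`g ↦ ev₁ (ρ_reg g f)` of the right regular representation against evaluation at `1`, so
`φ f = b_reg (f ⊗ ev₁)`. Taking this as the definition, naturality of `b` along the intertwiner
`v ↦ (g ↦ ψ (ρ g v))` from `E` to the regular representation shows that `φ` sends every matrix
coefficient to the prescribed value. The constant function `1` is the matrix coefficient of the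
trivial representation, and the product of two functions is the image of their tensor product
under the intertwiner `mul'` from `ρ_reg ⊗ ρ_reg` to `ρ_reg`, so unitality and multiplicativity
of `φ` follow from those of `b`.
-/

open TannakaDuality.FiniteGroup

namespace Representation

variable {k G E : Type*} [CommRing k] [Monoid G] [AddCommMonoid E] [Module k E]

def coeffMap (ρ : Representation k G E) (ψ : Module.Dual k E) : E →ₗ[k] G → k where
  toFun v g := ψ (ρ g v)
  map_add' v w := by ext; simp
  map_smul' c v := by ext; simp

@[simp]
theorem coeffMap_apply (ρ : Representation k G E) (ψ : Module.Dual k E) (v : E) (g : G) :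
    ρ.coeffMap ψ v g = ψ (ρ g v) :=
  rfl

theorem proj_one_comp_coeffMap (ρ : Representation k G E) (ψ : Module.Dual k E) :
    LinearMap.proj 1 ∘ₗ ρ.coeffMap ψ = ψ := by
  ext v; simp

theorem coeffMap_trivial_one : (trivial k G k).coeffMap LinearMap.id 1 = 1 :=
  rfl

end Representation

namespace TannakaDuality.FiniteGroup

universe u

variable {k G : Type u} [CommRing k] [Group G]

theorem coeffMap_comp {E : Type*} [AddCommMonoid E] [Module k E] (ρ : Representation k G E)
    (ψ : Module.Dual k E) (g : G) :
    ρ.coeffMap ψ ∘ₗ ρ g = rightRegular g ∘ₗ ρ.coeffMap ψ := by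
  ext v x; simp

theorem coeffMap_proj_one_rightRegular (f : G → k) :
    rightRegular.coeffMap (LinearMap.proj 1) f = f := by
  ext; simp

theorem mul'_comp_tprod (g : G) :
    LinearMap.mul' k (G → k) ∘ₗ rightRegular.tprod rightRegular g =
      rightRegular g ∘ₗ LinearMap.mul' k (G → k) := by
  ext; simp

theorem proj_one_comp_mul' :
    LinearMap.proj (1 : G) ∘ₗ LinearMap.mul' k (G → k) =
      (TensorProduct.lid k k).toLinearMap ∘ₗ
        TensorProduct.map (LinearMap.proj 1) (LinearMap.proj 1) := by
  ext; simp

end TannakaDuality.FiniteGroup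

namespace Reconstruction

variable {k G M : Type} [Field k] [Group G] [Finite G] [AddCommGroup M] [Module k M]

variable (b : ∀ (E : Type) [AddCommGroup E] [Module k E] [FiniteDimensional k E],
  Representation k G E → (E →ₗ[k] Module.Dual k E →ₗ[k] Module.End k M))

def IsNatural : Prop :=
  ∀ (E₁ E₂ : Type) [AddCommGroup E₁] [Module k E₁] [FiniteDimensional k E₁]
    [AddCommGroup E₂] [Module k E₂] [FiniteDimensional k E₂]
    (ρ₁ : Representation k G E₁) (ρ₂ : Representation k G E₂)
    (f : E₁ →ₗ[k] E₂), (∀ g : G, f ∘ₗ ρ₁ g = ρ₂ g ∘ₗ f) →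
    ∀ (v : E₁) (ψ : Module.Dual k E₂), b E₂ ρ₂ (f v) ψ = b E₁ ρ₁ v (ψ ∘ₗ f)

def IsMultiplicative : Prop :=
  ∀ (E₁ E₂ : Type) [AddCommGroup E₁] [Module k E₁] [FiniteDimensional k E₁]
    [AddCommGroup E₂] [Module k E₂] [FiniteDimensional k E₂]
    (ρ₁ : Representation k G E₁) (ρ₂ : Representation k G E₂)
    (v₁ : E₁) (v₂ : E₂) (ψ₁ : Module.Dual k E₁) (ψ₂ : Module.Dual k E₂),
    b (E₁ ⊗[k] E₂) (ρ₁.tprod ρ₂) (v₁ ⊗ₜ[k] v₂)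
      ((TensorProduct.lid k k).toLinearMap ∘ₗ TensorProduct.map ψ₁ ψ₂) =
      b E₁ ρ₁ v₁ ψ₁ * b E₂ ρ₂ v₂ ψ₂

noncomputable def onFunctions : (G → k) →ₗ[k] Module.End k M :=
  (b (G → k) rightRegular).flip (LinearMap.proj 1)

variable {b}

theorem onFunctions_coeffMap (hnat : IsNatural b) {E : Type} [AddCommGroup E] [Module k E]
    [FiniteDimensional k E] (ρ : Representation k G E) (v : E) (ψ : Module.Dual k E) :
    onFunctions b (ρ.coeffMap ψ v) = b E ρ v ψ := by
  have h := hnat E (G → k) ρ rightRegular (ρ.coeffMap ψ) (coeffMap_comp ρ ψ) v (LinearMap.proj 1)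
  rwa [Representation.proj_one_comp_coeffMap] at h

theorem onFunctions_one (hnat : IsNatural b)
    (hone : b k (Representation.trivial k G k) 1 LinearMap.id = 1) :
    onFunctions b 1 = 1 := by
  rw [← Representation.coeffMap_trivial_one, onFunctions_coeffMap hnat, hone]

theorem onFunctions_mul (hnat : IsNatural b) (hmul : IsMultiplicative b) (f₁ f₂ : G → k) :
    onFunctions b (f₁ * f₂) = onFunctions b f₁ * onFunctions b f₂ := by
  have h := hnat _ _ _ rightRegular _ mul'_comp_tprod (f₁ ⊗ₜ[k] f₂) (LinearMap.proj 1)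
  rw [LinearMap.mul'_apply, proj_one_comp_mul'] at h
  exact h.trans (hmul _ _ _ _ f₁ f₂ _ _)

end Reconstruction

open Reconstruction in
theorem reconstruction_from_matrix_coefficients_general
    {G : Type} [Group G] [Finite G] {M : Type} [AddCommGroup M] [Module ℂ M]
    (b : ∀ (E : Type) [AddCommGroup E] [Module ℂ E] [FiniteDimensional ℂ E],
      Representation ℂ G E → (E →ₗ[ℂ] Module.Dual ℂ E →ₗ[ℂ] Module.End ℂ M))
    (hnat : ∀ (E₁ E₂ : Type) [AddCommGroup E₁] [Module ℂ E₁] [FiniteDimensional ℂ E₁]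
      [AddCommGroup E₂] [Module ℂ E₂] [FiniteDimensional ℂ E₂]
      (ρ₁ : Representation ℂ G E₁) (ρ₂ : Representation ℂ G E₂)
      (f : E₁ →ₗ[ℂ] E₂), (∀ g : G, f ∘ₗ ρ₁ g = ρ₂ g ∘ₗ f) →
      ∀ (v : E₁) (ψ : Module.Dual ℂ E₂), b E₂ ρ₂ (f v) ψ = b E₁ ρ₁ v (ψ ∘ₗ f))
    (hmul : ∀ (E₁ E₂ : Type) [AddCommGroup E₁] [Module ℂ E₁] [FiniteDimensional ℂ E₁]
      [AddCommGroup E₂] [Module ℂ E₂] [FiniteDimensional ℂ E₂]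
      (ρ₁ : Representation ℂ G E₁) (ρ₂ : Representation ℂ G E₂)
      (v₁ : E₁) (v₂ : E₂) (ψ₁ : Module.Dual ℂ E₁) (ψ₂ : Module.Dual ℂ E₂),
      b (E₁ ⊗[ℂ] E₂) (ρ₁.tprod ρ₂) (v₁ ⊗ₜ[ℂ] v₂)
        ((TensorProduct.lid ℂ ℂ).toLinearMap ∘ₗ TensorProduct.map ψ₁ ψ₂) =
        b E₁ ρ₁ v₁ ψ₁ * b E₂ ρ₂ v₂ ψ₂)
    (hone : b ℂ (Representation.trivial ℂ G ℂ) 1 LinearMap.id = 1) :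
    ∃! φ : (G → ℂ) →ₐ[ℂ] Module.End ℂ M,
      ∀ (E : Type) [AddCommGroup E] [Module ℂ E] [FiniteDimensional ℂ E]
        (ρ : Representation ℂ G E) (v : E) (ψ : Module.Dual ℂ E),
        φ (fun g => ψ (ρ g v)) = b E ρ v ψ := by
  refine ⟨AlgHom.ofLinearMap (onFunctions b) (onFunctions_one hnat hone)
    (onFunctions_mul hnat hmul), fun E _ _ _ ρ v ψ => onFunctions_coeffMap hnat ρ v ψ, ?_⟩
  refine fun φ hφ => AlgHom.ext fun f => ?_
  rw [← coeffMap_proj_one_rightRegular f]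
  exact (hφ _ rightRegular f (LinearMap.proj 1)).trans
    (onFunctions_coeffMap hnat rightRegular f (LinearMap.proj 1)).symm

/-- Reconstruction (finite-group model of Lemma 3.6): a natural, multiplicative, unital
family of maps `b_E : E ⊗ E* → End(M)` indexed by finite-dimensional representations `E`
of a finite group `G` comes from a unique unital algebra homomorphism `φ` from the
algebra of functions on `G` (pointwise multiplication) to `End(M)`, with `φ` sending the
matrix coefficient `g ↦ ψ(ρ(g)v)` to `b_E(v ⊗ ψ)`. -/
theorem reconstruction_from_matrix_coefficients
    {G : Type} [Group G] [Finite G] {M : Type} [AddCommGroup M] [Module ℂ M]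
    [FiniteDimensional ℂ M]
    (b : ∀ (E : Type) [AddCommGroup E] [Module ℂ E] [FiniteDimensional ℂ E],
      Representation ℂ G E → (E →ₗ[ℂ] Module.Dual ℂ E →ₗ[ℂ] Module.End ℂ M))
    (hnat : ∀ (E₁ E₂ : Type) [AddCommGroup E₁] [Module ℂ E₁] [FiniteDimensional ℂ E₁]
      [AddCommGroup E₂] [Module ℂ E₂] [FiniteDimensional ℂ E₂]
      (ρ₁ : Representation ℂ G E₁) (ρ₂ : Representation ℂ G E₂)
      (f : E₁ →ₗ[ℂ] E₂), (∀ g : G, f ∘ₗ ρ₁ g = ρ₂ g ∘ₗ f) →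
      ∀ (v : E₁) (ψ : Module.Dual ℂ E₂), b E₂ ρ₂ (f v) ψ = b E₁ ρ₁ v (ψ ∘ₗ f))
    (hmul : ∀ (E₁ E₂ : Type) [AddCommGroup E₁] [Module ℂ E₁] [FiniteDimensional ℂ E₁]
      [AddCommGroup E₂] [Module ℂ E₂] [FiniteDimensional ℂ E₂]
      (ρ₁ : Representation ℂ G E₁) (ρ₂ : Representation ℂ G E₂)
      (v₁ : E₁) (v₂ : E₂) (ψ₁ : Module.Dual ℂ E₁) (ψ₂ : Module.Dual ℂ E₂),
      b (E₁ ⊗[ℂ] E₂) (ρ₁.tprod ρ₂) (v₁ ⊗ₜ[ℂ] v₂)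
        ((TensorProduct.lid ℂ ℂ).toLinearMap ∘ₗ TensorProduct.map ψ₁ ψ₂) =
        b E₁ ρ₁ v₁ ψ₁ * b E₂ ρ₂ v₂ ψ₂)
    (hone : b ℂ (Representation.trivial ℂ G ℂ) 1 LinearMap.id = 1) :
    ∃! φ : (G → ℂ) →ₐ[ℂ] Module.End ℂ M,
      ∀ (E : Type) [AddCommGroup E] [Module ℂ E] [FiniteDimensional ℂ E]
        (ρ : Representation ℂ G E) (v : E) (ψ : Module.Dual ℂ E),
        φ (fun g => ψ (ρ g v)) = b E ρ v ψ :=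
  reconstruction_from_matrix_coefficients_general b hnat hmul hone
end
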